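/- For a fixed CFG and input of length n, the total number of items in the variant's U array satisfies |U| ≤ |E|, where |U| = Σ_i |U_i| and |E| = Σ_{i,j} |E_{i,j}|. -/

import Mathlib

/-! Formalization of Earley parsing and the Nederhof–Satta variant. -/

variable {T N : Type}

/-- A context-free grammar: a start nonterminal and a set of productions. -/
structure CFG (T N : Type) where
  initial : N
  rules : Set (N × List (Symbol T N))

/-- One rewriting step of the grammar. -/
def CFG.Produces (g : CFG T N) (u v : List (Symbol T N)) : Prop :=
  ∃ A α p q, (A, α) ∈ g.rules ∧ u = p ++ [Symbol.nonterminal A] ++ q ∧ v = p ++ α ++ q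

/-- The derivation relation ⇒* (reflexive-transitive closure of rewriting). -/
def CFG.Derives (g : CFG T N) : List (Symbol T N) → List (Symbol T N) → Prop :=
  Relation.ReflTransGen g.Produces

/-- The language of the grammar: { w | S ⇒* w }. -/
def CFG.language (g : CFG T N) : Set (List T) :=
  { w | g.Derives [Symbol.nonterminal g.initial] (w.map Symbol.terminal) }

/-- `inputSlice w i j` is the substring a_{i+1}⋯a_j of `w` (0-based: w[i..j)), as symbols. -/
def inputSlice (w : List T) (i j : ℕ) : List (Symbol T N) :=
  ((w.take j).drop i).map Symbol.terminal

/-- The least Earley table: `Earley g w A α β i j` means the dotted item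
[A → α • β] is inserted in E_{i,j}. -/
inductive Earley (g : CFG T N) (w : List T) :
    N → List (Symbol T N) → List (Symbol T N) → ℕ → ℕ → Prop where
  | init {α} : (g.initial, α) ∈ g.rules → Earley g w g.initial [] α 0 0
  | predict {B α A β i j γ} : Earley g w B α (Symbol.nonterminal A :: β) i j →
      (A, γ) ∈ g.rules → Earley g w A [] γ j j
  | scan {A α a β i j} : Earley g w A α (Symbol.terminal a :: β) i j →
      w[j]? = some a → Earley g w A (α ++ [Symbol.terminal a]) β i (j + 1)
  | complete {A α B β i k γ j} : Earley g w A α (Symbol.nonterminal B :: β) i k →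
      Earley g w B γ [] k j → (B, γ) ∈ g.rules →
      Earley g w A (α ++ [Symbol.nonterminal B]) β i j

mutual
  /-- Forward part of the variant: `VarU g w β j` means suffix item [β] ∈ U_j. -/
  inductive VarU (g : CFG T N) (w : List T) : List (Symbol T N) → ℕ → Prop where
    | init {α} : (g.initial, α) ∈ g.rules → VarU g w α 0
    | predict {A β j γ} : VarU g w (Symbol.nonterminal A :: β) j →
        (A, γ) ∈ g.rules → VarU g w γ j
    | scan {a β j} : VarU g w (Symbol.terminal a :: β) j → w[j]? = some a →
        VarU g w β (j + 1)
    | complete {B β k γ j} : VarU g w (Symbol.nonterminal B :: β) k → (B, γ) ∈ g.rules →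
        VarT g w γ k j → VarU g w β j

  /-- Backward part of the variant: `VarT g w β j m` means suffix item [β] ∈ T_{j,m}. -/
  inductive VarT (g : CFG T N) (w : List T) : List (Symbol T N) → ℕ → ℕ → Prop where
    | empty {m} : VarU g w [] m → VarT g w [] m m
    | scan {a β j m} : VarU g w (Symbol.terminal a :: β) j → w[j]? = some a →
        VarT g w β (j + 1) m → VarT g w (Symbol.terminal a :: β) j m
    | complete {B β k γ j m} : VarU g w (Symbol.nonterminal B :: β) k → (B, γ) ∈ g.rules →
        VarT g w γ k j → VarT g w β j m → VarT g w (Symbol.nonterminal B :: β) k m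
end

/-! Every suffix item [β] ∈ U_j is the suffix of some Earley item [A → α • β] ∈ E_{i,j}, so U
is contained in the image of E under (A, α, β, i, j) ↦ (β, j). The induction goes through
because [β] ∈ T_{k,m} is exactly what is needed to advance any [A → α • β] ∈ E_{i,k} to
[A → αβ •] ∈ E_{i,m}. Finiteness of E, which `Set.ncard` needs, holds since every Earley item
splits a rule and has positions at most |w|. -/

section

variable {g : CFG T N} {w : List T}

theorem Earley.mem_rules {A : N} {α β : List (Symbol T N)} {i j : ℕ}
    (h : Earley g w A α β i j) : (A, α ++ β) ∈ g.rules := by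
  induction h with
  | init hr | predict _ hr => exact hr
  | scan _ _ ih | complete _ _ _ ih => simpa using ih

theorem Earley.le_length {A : N} {α β : List (Symbol T N)} {i j : ℕ}
    (h : Earley g w A α β i j) : i ≤ j ∧ j ≤ w.length := by
  induction h with
  | init => simp
  | predict _ _ ih => exact ⟨le_rfl, ih.2⟩
  | scan _ ha ih => exact ⟨ih.1.trans (Nat.le_succ _), (List.getElem?_eq_some_iff.mp ha).1⟩
  | complete _ _ _ ih₁ ih₂ => exact ⟨ih₁.1.trans ih₂.1, ih₂.2⟩

theorem VarT.earley_complete {β : List (Symbol T N)} {k m : ℕ}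
    {A : N} {α : List (Symbol T N)} {i : ℕ} :
    VarT g w β k m → Earley g w A α β i k → Earley g w A (α ++ β) [] i m
  | .empty _, he => by simpa using he
  | .scan _ ha ht, he => by simpa using ht.earley_complete (he.scan ha)
  | .complete _ hr hγ hβ, he => by
    have hγ' := hγ.earley_complete (he.predict hr)
    rw [List.nil_append] at hγ'
    simpa using hβ.earley_complete (he.complete hγ' hr)

theorem VarU.exists_earley {β : List (Symbol T N)} {j : ℕ} :
    VarU g w β j → ∃ A α i, Earley g w A α β i j
  | .init hr => ⟨_, _, _, .init hr⟩
  | .predict hu hr =>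
    let ⟨_, _, _, he⟩ := hu.exists_earley
    ⟨_, _, _, he.predict hr⟩
  | .scan hu ha =>
    let ⟨_, _, _, he⟩ := hu.exists_earley
    ⟨_, _, _, he.scan ha⟩
  | .complete hu hr hγ =>
    let ⟨_, _, _, he⟩ := hu.exists_earley
    ⟨_, _, _, he.complete (by simpa using hγ.earley_complete (he.predict hr)) hr⟩

theorem Earley.setOf_finite (hfin : g.rules.Finite) :
    {q : N × List (Symbol T N) × List (Symbol T N) × ℕ × ℕ |
      Earley g w q.1 q.2.1 q.2.2.1 q.2.2.2.1 q.2.2.2.2}.Finite := by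
  let split (r : N × List (Symbol T N)) (x : ℕ × ℕ × ℕ) :
      N × List (Symbol T N) × List (Symbol T N) × ℕ × ℕ :=
    (r.1, r.2.take x.1, r.2.drop x.1, x.2.1, x.2.2)
  refine (hfin.biUnion fun r _ => ((Set.finite_Iic r.2.length).prod
    ((Set.finite_Iic w.length).prod (Set.finite_Iic w.length))).image (split r)).subset ?_
  rintro ⟨A, α, β, i, j⟩ he
  obtain ⟨hij, hj⟩ := he.le_length
  refine Set.mem_biUnion he.mem_rules ⟨(α.length, i, j), ⟨?_, hij.trans hj, hj⟩, ?_⟩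
  · simp
  · simp [split]

end

/-- |U| ≤ |E|, counting all items over all entries. -/
theorem variant_U_size_le_earley (g : CFG T N) (w : List T)
    (hfin : g.rules.Finite) :
    Set.ncard {p : List (Symbol T N) × ℕ | VarU g w p.1 p.2} ≤
      Set.ncard {q : N × List (Symbol T N) × List (Symbol T N) × ℕ × ℕ |
        Earley g w q.1 q.2.1 q.2.2.1 q.2.2.2.1 q.2.2.2.2} := by
  set E := {q : N × List (Symbol T N) × List (Symbol T N) × ℕ × ℕ |
    Earley g w q.1 q.2.1 q.2.2.1 q.2.2.2.1 q.2.2.2.2}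
  have hE : E.Finite := Earley.setOf_finite hfin
  have hU : {p : List (Symbol T N) × ℕ | VarU g w p.1 p.2} ⊆
      (fun q => (q.2.2.1, q.2.2.2.2)) '' E := by
    rintro ⟨β, j⟩ hu
    obtain ⟨A, α, i, he⟩ := VarU.exists_earley hu
    exact ⟨(A, α, β, i, j), he, rfl⟩
  calc _ ≤ ((fun q => (q.2.2.1, q.2.2.2.2)) '' E).ncard := Set.ncard_le_ncard hU (hE.image _)
    _ ≤ E.ncard := Set.ncard_image_le hE
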